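/- Let μ = N(m_1, Σ_1) and ν = N(m_2, Σ_2) be Gaussian measures on ℝ^d with positive definite covariances, and let 0 ≤ ε < α* = 1/2 (the maximal halfspace depth of a continuous distribution is attained at value 1/2 for Gaussians). Then |DR_{1,ε}(μ,ν) − ‖m_1 − m_2‖| ≤ C_ε · sup_{u ∈ S^{d−1}} |√(uᵀΣ_1u) − √(uᵀΣ_2u)|, where C_ε = (1/(1/2 − ε)) ∫_ε^{1/2} |Φ^{-1}(1−α)| dα and Φ is the cdf of the standard univariate Gaussian distribution. -/

import Mathlib

/-!
In direction `u` the halfspace depth of `x` under `N(m, Σ)` is `Φ(⟪u, x - m⟫ / σ(u))` with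
`σ(u) = √(uᵀ Σ u)`, so by the symmetry of `Φ` the `α`-depth region is the ellipsoid with support
function `u ↦ ⟪u, m⟫ + Φ⁻¹(1 - α) σ(u)`. The Hausdorff distance of two convex bodies is bounded
by the sup-distance of their support functions on the sphere (project onto the nearest point),
and conversely bounded below by the gap of the support functions in any single direction (test
a supporting point). In the direction of `m₁ - m₂` this pins the Hausdorff distance between the
two `α`-regions to `‖m₁ - m₂‖ ± Φ⁻¹(1 - α) sup |σ₁ - σ₂|`; averaging over `α ∈ (ε, 1/2]` gives
the claim. Chebyshev's bound `Φ⁻¹(1 - α) ≤ α^(-1/2)` makes the average finite down to `α = 0`.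
-/

open MeasureTheory ProbabilityTheory
open scoped RealInnerProductSpace

/-- The halfspace (Tukey) depth of `x` w.r.t. a measure `ρ` on `ℝ^d`. -/
noncomputable def halfspaceDepth (d : ℕ) (ρ : Measure (EuclideanSpace ℝ (Fin d)))
    (x : EuclideanSpace ℝ (Fin d)) : ℝ :=
  ⨅ u : Metric.sphere (0 : EuclideanSpace ℝ (Fin d)) 1,
    (ρ {y | ⟪(u : EuclideanSpace ℝ (Fin d)), y⟫ ≤ ⟪(u : EuclideanSpace ℝ (Fin d)), x⟫}).toReal

/-- The `α`-depth region of the halfspace depth. -/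
def hdRegion (d : ℕ) (ρ : Measure (EuclideanSpace ℝ (Fin d))) (α : ℝ) :
    Set (EuclideanSpace ℝ (Fin d)) :=
  {x | α ≤ halfspaceDepth d ρ x}

/-- The quadratic form `u ↦ uᵀ Σ u` of a matrix `Σ` on `ℝ^d`. -/
def quadForm (d : ℕ) (S : Matrix (Fin d) (Fin d) ℝ) (u : EuclideanSpace ℝ (Fin d)) : ℝ :=
  dotProduct (fun i => u i) (S.mulVec (fun i => u i))

/-- `Φ`, the cdf of the standard univariate Gaussian distribution. -/
noncomputable def stdGaussianCDF (t : ℝ) : ℝ :=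
  ((gaussianReal 0 1) (Set.Iic t)).toReal

/-- The generalized inverse `Φ⁻¹` of the standard Gaussian cdf. -/
noncomputable def stdGaussianQuantile (q : ℝ) : ℝ :=
  sInf {t : ℝ | q ≤ stdGaussianCDF t}

/-- The depth-region discrepancy `DR_{1,ε}` (with `α* = 1/2`) computed with the
halfspace depth. -/
noncomputable def DR1eps (d : ℕ) (ε : ℝ)
    (μ ν : Measure (EuclideanSpace ℝ (Fin d))) : ℝ :=
  (1 / 2 - ε)⁻¹ * ∫ α in ε..(1 / 2),
    Metric.hausdorffDist (hdRegion d μ α) (hdRegion d ν α)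

open Set Real Metric

section StdGaussian

lemma stdGaussianCDF_eq_cdf : stdGaussianCDF = cdf (gaussianReal 0 1) := by
  ext t
  rw [cdf_eq_real, stdGaussianCDF, measureReal_def]

lemma stdGaussianCDF_eq_integral (t : ℝ) :
    stdGaussianCDF t = ∫ x in Iic t, gaussianPDFReal 0 1 x := by
  rw [stdGaussianCDF, gaussianReal_apply_eq_integral _ one_ne_zero, ENNReal.toReal_ofReal]
  exact setIntegral_nonneg measurableSet_Iic fun x _ => gaussianPDFReal_nonneg 0 1 x

lemma stdGaussianCDF_sub (s t : ℝ) :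
    stdGaussianCDF t - stdGaussianCDF s = ∫ x in s..t, gaussianPDFReal 0 1 x := by
  rw [stdGaussianCDF_eq_integral, stdGaussianCDF_eq_integral]
  exact intervalIntegral.integral_Iic_sub_Iic (integrable_gaussianPDFReal 0 1).integrableOn
    (integrable_gaussianPDFReal 0 1).integrableOn

lemma stdGaussianCDF_strictMono : StrictMono stdGaussianCDF := by
  intro s t hst
  have hpos : 0 < ∫ x in s..t, gaussianPDFReal 0 1 x :=
    intervalIntegral.intervalIntegral_pos_of_pos_on
      (integrable_gaussianPDFReal 0 1).intervalIntegrable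
      (fun x _ => gaussianPDFReal_pos 0 1 x one_ne_zero) hst
  linarith [stdGaussianCDF_sub s t]

lemma continuous_stdGaussianCDF : Continuous stdGaussianCDF := by
  have h : stdGaussianCDF = fun t => stdGaussianCDF 0 + ∫ x in 0..t, gaussianPDFReal 0 1 x := by
    ext t; rw [← stdGaussianCDF_sub]; ring
  rw [h]
  exact continuous_const.add (intervalIntegral.continuous_primitive
    (fun _ _ => (integrable_gaussianPDFReal 0 1).intervalIntegrable) 0)

lemma stdGaussianCDF_neg (t : ℝ) : stdGaussianCDF (-t) = 1 - stdGaussianCDF t := by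
  have hsymm : (gaussianReal 0 1).map (fun x => -x) = gaussianReal 0 1 := by
    simpa using gaussianReal_map_neg (μ := 0) (v := 1)
  have := nullSingletonClass_gaussianReal (μ := 0) one_ne_zero
  have hpre : (Neg.neg : ℝ → ℝ) ⁻¹' Iic (-t) = Ici t := by ext; simp
  rw [stdGaussianCDF, ← hsymm, Measure.map_apply measurable_neg measurableSet_Iic, hpre,
    ← measure_congr Ioi_ae_eq_Ici, ← compl_Iic, ← measureReal_def,
    probReal_compl_eq_one_sub measurableSet_Iic, measureReal_def, stdGaussianCDF]

lemma stdGaussianCDF_zero : stdGaussianCDF 0 = 1 / 2 := by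
  have := stdGaussianCDF_neg 0
  rw [neg_zero] at this
  linarith

lemma one_sub_stdGaussianCDF_le {t : ℝ} (ht : 0 < t) : 1 - stdGaussianCDF t ≤ 1 / t ^ 2 := by
  have hcheb := meas_ge_le_variance_div_sq (memLp_id_gaussianReal (μ := 0) (v := 1) 2) ht
  rw [variance_id_gaussianReal, NNReal.coe_one] at hcheb
  simp only [id, integral_id_gaussianReal, sub_zero] at hcheb
  have hsub : (Iic t)ᶜ ⊆ {x : ℝ | t ≤ |x|} := fun x (hx : ¬ x ≤ t) =>
    (not_le.1 hx).le.trans (le_abs_self x)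
  rw [stdGaussianCDF, ← measureReal_def, ← probReal_compl_eq_one_sub measurableSet_Iic]
  calc (gaussianReal 0 1).real (Iic t)ᶜ ≤ (gaussianReal 0 1).real {x : ℝ | t ≤ |x|} :=
        measureReal_mono hsub
    _ ≤ 1 / t ^ 2 := by
        rw [measureReal_def]
        exact ENNReal.toReal_le_of_le_ofReal (by positivity) hcheb

lemma mem_range_stdGaussianCDF {q : ℝ} (h0 : 0 < q) (h1 : q < 1) :
    q ∈ range stdGaussianCDF := by
  refine mem_range_of_exists_le_of_exists_ge continuous_stdGaussianCDF ?_ ?_ <;>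
    rw [stdGaussianCDF_eq_cdf]
  exacts [((tendsto_cdf_atBot _).eventually (eventually_le_nhds h0)).exists,
    ((tendsto_cdf_atTop _).eventually (eventually_ge_nhds h1)).exists]

lemma stdGaussianQuantile_eq {q t : ℝ} (h : stdGaussianCDF t = q) :
    stdGaussianQuantile q = t := by
  have hset : {s : ℝ | q ≤ stdGaussianCDF s} = Ici t := by
    ext s
    simp only [mem_ofPred_eq, mem_Ici, ← h, stdGaussianCDF_strictMono.le_iff_le]
  rw [stdGaussianQuantile, hset, csInf_Ici]

lemma stdGaussianCDF_stdGaussianQuantile {q : ℝ} (h0 : 0 < q) (h1 : q < 1) :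
    stdGaussianCDF (stdGaussianQuantile q) = q := by
  obtain ⟨t, rfl⟩ := mem_range_stdGaussianCDF h0 h1
  rw [stdGaussianQuantile_eq rfl]

lemma le_stdGaussianQuantile_iff {q s : ℝ} (h0 : 0 < q) (h1 : q < 1) :
    s ≤ stdGaussianQuantile q ↔ stdGaussianCDF s ≤ q := by
  conv_rhs => rw [← stdGaussianCDF_stdGaussianQuantile h0 h1]
  exact stdGaussianCDF_strictMono.le_iff_le.symm

lemma stdGaussianQuantile_le_iff {q s : ℝ} (h0 : 0 < q) (h1 : q < 1) :
    stdGaussianQuantile q ≤ s ↔ q ≤ stdGaussianCDF s := by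
  conv_rhs => rw [← stdGaussianCDF_stdGaussianQuantile h0 h1]
  exact stdGaussianCDF_strictMono.le_iff_le.symm

lemma stdGaussianQuantile_nonneg {q : ℝ} (h0 : 1 / 2 ≤ q) (h1 : q < 1) :
    0 ≤ stdGaussianQuantile q := by
  rwa [le_stdGaussianQuantile_iff (by linarith) h1, stdGaussianCDF_zero]

lemma monotoneOn_stdGaussianQuantile : MonotoneOn stdGaussianQuantile (Ioo 0 1) :=
  fun q hq q' hq' hqq' => by
    rw [stdGaussianQuantile_le_iff hq.1 hq.2,
      stdGaussianCDF_stdGaussianQuantile hq'.1 hq'.2]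
    exact hqq'

lemma stdGaussianQuantile_one_sub_le {α : ℝ} (h0 : 0 < α) (h1 : α < 1) :
    stdGaussianQuantile (1 - α) ≤ (√α)⁻¹ := by
  have hs : 0 < (√α)⁻¹ := by positivity
  have htail := one_sub_stdGaussianCDF_le hs
  rw [inv_pow, sq_sqrt h0.le, one_div, inv_inv] at htail
  rw [stdGaussianQuantile_le_iff (by linarith) (by linarith)]
  linarith

lemma integrableOn_stdGaussianQuantile_one_sub :
    IntegrableOn (fun α => stdGaussianQuantile (1 - α)) (Ioc 0 (1 / 2)) := by
  have hanti : AntitoneOn (fun α => stdGaussianQuantile (1 - α)) (Ioc 0 (1 / 2)) :=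
    fun a ha b hb hab => monotoneOn_stdGaussianQuantile
      ⟨by linarith [hb.2], by linarith [hb.1]⟩ ⟨by linarith [ha.2], by linarith [ha.1]⟩
      (by linarith)
  have hdom : IntegrableOn (fun α : ℝ => α ^ (-(1 / 2) : ℝ)) (Ioc 0 (1 / 2)) :=
    (intervalIntegrable_iff_integrableOn_Ioc_of_le (by norm_num)).1
      (intervalIntegral.intervalIntegrable_rpow' (by norm_num))
  refine hdom.mono'
    (aemeasurable_restrict_of_antitoneOn measurableSet_Ioc hanti).aestronglyMeasurable
    (ae_restrict_of_forall_mem measurableSet_Ioc fun α hα => ?_)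
  have hq := stdGaussianQuantile_nonneg (q := 1 - α) (by linarith [hα.2]) (by linarith [hα.1])
  rw [Real.norm_eq_abs, abs_of_nonneg hq, rpow_neg hα.1.le, ← sqrt_eq_rpow]
  exact stdGaussianQuantile_one_sub_le hα.1 (by linarith [hα.2])

end StdGaussian

section WulffShape

variable {F : Type*} [NormedAddCommGroup F] [InnerProductSpace ℝ F]

lemma inv_norm_smul_mem_sphere {v : F} (hv : v ≠ 0) : ‖v‖⁻¹ • v ∈ sphere (0 : F) 1 :=
  mem_sphere_zero_iff_norm.2 (norm_smul_inv_norm hv)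

lemma real_inner_inv_norm_smul_self (v : F) : ⟪‖v‖⁻¹ • v, v⟫ = ‖v‖ := by
  rcases eq_or_ne v 0 with rfl | hv
  · simp
  rw [real_inner_smul_left, real_inner_self_eq_norm_sq, sq, inv_mul_cancel_left₀
    (norm_ne_zero_iff.2 hv)]

/-- The direction from the nearest point of `C` to `x` is the one that witnesses the bound. -/
lemma exists_dist_le_of_forall_inner_le [CompleteSpace F] {C : Set F} (hconv : Convex ℝ C)
    (hclosed : IsClosed C) (hne : C.Nonempty) {x : F} {r : ℝ} (hr : 0 ≤ r)
    (h : ∀ u ∈ sphere (0 : F) 1, ∃ y ∈ C, ⟪u, x⟫ ≤ ⟪u, y⟫ + r) :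
    ∃ y ∈ C, dist x y ≤ r := by
  obtain ⟨p, hpC, hp⟩ :=
    exists_norm_eq_iInf_of_complete_convex hne hclosed.isComplete hconv x
  have hobtuse := (norm_eq_iInf_iff_real_inner_le_zero hconv hpC).1 hp
  refine ⟨p, hpC, ?_⟩
  by_contra! hfar
  have hxp : x - p ≠ 0 := by
    rw [← norm_ne_zero_iff, ← dist_eq_norm]; linarith
  obtain ⟨y, hyC, hxy⟩ := h _ (inv_norm_smul_mem_sphere hxp)
  have hyp : ⟪‖x - p‖⁻¹ • (x - p), y - p⟫ ≤ 0 := by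
    rw [real_inner_smul_left]
    exact mul_nonpos_of_nonneg_of_nonpos (by positivity) (hobtuse y hyC)
  have hxp' := real_inner_inv_norm_smul_self (x - p)
  rw [inner_sub_right] at hyp hxp'
  rw [dist_eq_norm] at hfar
  linarith

/-- When every `h u` is attained on it, `h` is the support function of this set on the unit
sphere. -/
def wulffShape (h : F → ℝ) : Set F := {x | ∀ u ∈ sphere (0 : F) 1, ⟪u, x⟫ ≤ h u}

variable {h h₁ h₂ : F → ℝ}

lemma convex_wulffShape : Convex ℝ (wulffShape h) := by
  intro x hx y hy a b ha hb hab u hu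
  rw [inner_add_right, real_inner_smul_right, real_inner_smul_right]
  calc a * ⟪u, x⟫ + b * ⟪u, y⟫ ≤ a * h u + b * h u :=
        add_le_add (mul_le_mul_of_nonneg_left (hx u hu) ha)
          (mul_le_mul_of_nonneg_left (hy u hu) hb)
    _ = h u := by rw [← add_mul, hab, one_mul]

lemma isClosed_wulffShape : IsClosed (wulffShape h) := by
  have : wulffShape h = ⋂ u ∈ sphere (0 : F) 1, {x | ⟪u, x⟫ ≤ h u} := by
    ext x; simp [wulffShape]
  rw [this]
  exact isClosed_biInter fun u _ => isClosed_le (continuous_const.inner continuous_id)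
    continuous_const

lemma wulffShape_subset_closedBall {m : F} {R : ℝ} (hR : 0 ≤ R)
    (hh : ∀ u ∈ sphere (0 : F) 1, h u ≤ ⟪u, m⟫ + R) : wulffShape h ⊆ closedBall m R := by
  intro x hx
  rw [mem_closedBall, dist_eq_norm]
  rcases eq_or_ne (x - m) 0 with hxm | hxm
  · rw [hxm, norm_zero]; exact hR
  have hu := inv_norm_smul_mem_sphere hxm
  have := real_inner_inv_norm_smul_self (x - m)
  rw [inner_sub_right] at this
  linarith [hx _ hu, hh _ hu]

lemma exists_dist_le_of_mem_wulffShape [CompleteSpace F] (hne : (wulffShape h₂).Nonempty)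
    (hatt : ∀ u ∈ sphere (0 : F) 1, ∃ p ∈ wulffShape h₂, ⟪u, p⟫ = h₂ u) {r : ℝ} (hr : 0 ≤ r)
    (h₁₂ : ∀ u ∈ sphere (0 : F) 1, h₁ u ≤ h₂ u + r) {x : F} (hx : x ∈ wulffShape h₁) :
    ∃ y ∈ wulffShape h₂, dist x y ≤ r := by
  refine exists_dist_le_of_forall_inner_le convex_wulffShape isClosed_wulffShape hne hr
    fun u hu => ?_
  obtain ⟨p, hp, hpu⟩ := hatt u hu
  exact ⟨p, hp, by linarith [hx u hu, h₁₂ u hu]⟩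

lemma hausdorffDist_wulffShape_le [CompleteSpace F] (hne₁ : (wulffShape h₁).Nonempty)
    (hne₂ : (wulffShape h₂).Nonempty)
    (hatt₁ : ∀ u ∈ sphere (0 : F) 1, ∃ p ∈ wulffShape h₁, ⟪u, p⟫ = h₁ u)
    (hatt₂ : ∀ u ∈ sphere (0 : F) 1, ∃ p ∈ wulffShape h₂, ⟪u, p⟫ = h₂ u) {r : ℝ} (hr : 0 ≤ r)
    (h₁₂ : ∀ u ∈ sphere (0 : F) 1, |h₁ u - h₂ u| ≤ r) :
    hausdorffDist (wulffShape h₁) (wulffShape h₂) ≤ r :=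
  hausdorffDist_le_of_mem_dist hr
    (fun _ => exists_dist_le_of_mem_wulffShape hne₂ hatt₂ hr fun u hu => by
      linarith [(abs_le.1 (h₁₂ u hu)).2])
    (fun _ => exists_dist_le_of_mem_wulffShape hne₁ hatt₁ hr fun u hu => by
      linarith [(abs_le.1 (h₁₂ u hu)).1])

lemma sub_le_hausdorffDist_wulffShape {u : F} (hu : u ∈ sphere (0 : F) 1)
    (hatt : ∃ p ∈ wulffShape h₁, ⟪u, p⟫ = h₁ u) (hne : (wulffShape h₂).Nonempty)
    (hfin : hausdorffEDist (wulffShape h₁) (wulffShape h₂) ≠ ⊤) :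
    h₁ u - h₂ u ≤ hausdorffDist (wulffShape h₁) (wulffShape h₂) := by
  obtain ⟨p, hp, hpu⟩ := hatt
  refine le_trans ?_ (infDist_le_hausdorffDist_of_mem hp hfin)
  refine (le_infDist hne).2 fun y hy => ?_
  have hcs := real_inner_le_norm u (p - y)
  rw [mem_sphere_zero_iff_norm.1 hu, one_mul, inner_sub_right, ← dist_eq_norm] at hcs
  linarith [hy u hu]

end WulffShape

section QuadForm

variable {d : ℕ} {S S₁ S₂ : Matrix (Fin d) (Fin d) ℝ}

lemma quadForm_nonneg (hS : S.PosSemidef) (u : EuclideanSpace ℝ (Fin d)) :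
    0 ≤ quadForm d S u :=
  hS.dotProduct_mulVec_nonneg _

lemma quadForm_pos (hS : S.PosDef) {u : EuclideanSpace ℝ (Fin d)} (hu : u ≠ 0) :
    0 < quadForm d S u :=
  hS.dotProduct_mulVec_pos (x := WithLp.ofLp u) (by simpa using hu)

lemma quadForm_neg (u : EuclideanSpace ℝ (Fin d)) : quadForm d S (-u) = quadForm d S u := by
  rw [quadForm, show (fun i => (-u) i) = -(fun i => u i) from rfl, Matrix.mulVec_neg,
    dotProduct_neg, neg_dotProduct, neg_neg, quadForm]

lemma continuous_quadForm : Continuous (quadForm d S) := by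
  unfold quadForm
  fun_prop

lemma dotProduct_mulVec_le_sqrt_quadForm_mul (hS : S.PosSemidef) (u v : EuclideanSpace ℝ (Fin d)) :
    (fun i => u i) ⬝ᵥ S.mulVec (fun i => v i) ≤ √(quadForm d S u) * √(quadForm d S v) := by
  have hcs := (S.toBilin').apply_sq_le_of_symm (fun x => by
      simpa [Matrix.toBilin'_apply'] using hS.dotProduct_mulVec_nonneg x)
    (LinearMap.BilinForm.isSymm_iff.1 (Matrix.isSymm_toBilin'_iff_isSymm.2
      (Matrix.isHermitian_iff_isSymm.1 hS.isHermitian)))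
    (WithLp.ofLp u) (WithLp.ofLp v)
  simp only [Matrix.toBilin'_apply'] at hcs
  rw [← sqrt_mul (quadForm_nonneg hS u)]
  exact le_sqrt_of_sq_le hcs

lemma exists_sqrt_quadForm_le (S : Matrix (Fin d) (Fin d) ℝ) : ∃ B, 0 ≤ B ∧
    ∀ u ∈ sphere (0 : EuclideanSpace ℝ (Fin d)) 1, √(quadForm d S u) ≤ B := by
  obtain ⟨B, hB⟩ := (isCompact_sphere (0 : EuclideanSpace ℝ (Fin d)) 1).bddAbove_image
    (continuous_quadForm (S := S)).sqrt.continuousOn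
  exact ⟨max B 0, le_max_right _ _, fun u hu => (hB (mem_image_of_mem _ hu)).trans
    (le_max_left _ _)⟩

lemma bddAbove_abs_sqrt_quadForm_sub :
    BddAbove (range fun u : sphere (0 : EuclideanSpace ℝ (Fin d)) 1 =>
      |√(quadForm d S₁ u) - √(quadForm d S₂ u)|) :=
  (isCompact_range (((continuous_quadForm.comp continuous_subtype_val).sqrt.sub
    (continuous_quadForm.comp continuous_subtype_val).sqrt).abs)).bddAbove

end QuadForm

section Ellipsoid

variable {d : ℕ} {m m₁ m₂ : EuclideanSpace ℝ (Fin d)} {S S₁ S₂ : Matrix (Fin d) (Fin d) ℝ}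
  {a b c B M : ℝ}

/-- For positive definite `S` and `c ≥ 0` this is the ellipsoid `(x - m)ᵀ S⁻¹ (x - m) ≤ c²`,
given by its support function `u ↦ ⟪u, m⟫ + c √(uᵀ S u)`. -/
def ellipsoid (m : EuclideanSpace ℝ (Fin d)) (S : Matrix (Fin d) (Fin d) ℝ) (c : ℝ) :
    Set (EuclideanSpace ℝ (Fin d)) :=
  wulffShape fun u => ⟪u, m⟫ + c * √(quadForm d S u)

lemma center_mem_ellipsoid (hc : 0 ≤ c) : m ∈ ellipsoid m S c :=
  fun _ _ => le_add_of_nonneg_right (by positivity)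

lemma ellipsoid_nonempty (hc : 0 ≤ c) : (ellipsoid m S c).Nonempty :=
  ⟨m, center_mem_ellipsoid hc⟩

lemma exists_mem_ellipsoid_inner_eq (hS : S.PosSemidef) (hc : 0 ≤ c)
    (u : EuclideanSpace ℝ (Fin d)) :
    ∃ p ∈ ellipsoid m S c, ⟪u, p⟫ = ⟪u, m⟫ + c * √(quadForm d S u) := by
  set σ := √(quadForm d S u)
  have hinner : ∀ v : EuclideanSpace ℝ (Fin d),
      ⟪v, WithLp.toLp 2 (S.mulVec fun i => u i)⟫ = (fun i => v i) ⬝ᵥ S.mulVec fun i => u i := by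
    intro v
    simp [PiLp.inner_apply, dotProduct, mul_comm]
  have hscale : c / σ * σ ≤ c := by
    rcases eq_or_ne σ 0 with hσ | hσ
    · simpa [hσ] using hc
    · rw [div_mul_cancel₀ _ hσ]
  refine ⟨m + (c / σ) • WithLp.toLp 2 (S.mulVec fun i => u i), fun v _ => ?_, ?_⟩
  · rw [inner_add_right, real_inner_smul_right, hinner]
    have hcs := dotProduct_mulVec_le_sqrt_quadForm_mul hS v u
    calc ⟪v, m⟫ + c / σ * ((fun i => v i) ⬝ᵥ S.mulVec fun i => u i)
        ≤ ⟪v, m⟫ + c / σ * (√(quadForm d S v) * σ) := by gcongr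
      _ = ⟪v, m⟫ + (c / σ * σ) * √(quadForm d S v) := by ring
      _ ≤ ⟪v, m⟫ + c * √(quadForm d S v) := by gcongr
  · rw [inner_add_right, real_inner_smul_right, hinner]
    have hq : ((fun i => u i) ⬝ᵥ S.mulVec fun i => u i) = σ ^ 2 :=
      (sq_sqrt (quadForm_nonneg hS u)).symm
    rw [hq]
    rcases eq_or_ne σ 0 with hσ | hσ
    · simp [hσ]
    · field_simp

lemma ellipsoid_subset_closedBall (hc : 0 ≤ c) (hB₀ : 0 ≤ B)
    (hB : ∀ u ∈ sphere (0 : EuclideanSpace ℝ (Fin d)) 1, √(quadForm d S u) ≤ B) :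
    ellipsoid m S c ⊆ closedBall m (c * B) :=
  wulffShape_subset_closedBall (by positivity) fun u hu => by gcongr; exact hB u hu

lemma isBounded_ellipsoid (hc : 0 ≤ c) : Bornology.IsBounded (ellipsoid m S c) :=
  have ⟨_, hB₀, hB⟩ := exists_sqrt_quadForm_le S
  isBounded_closedBall.subset (ellipsoid_subset_closedBall hc hB₀ hB)

lemma hausdorffEDist_ellipsoid_ne_top (ha : 0 ≤ a) (hb : 0 ≤ b) :
    hausdorffEDist (ellipsoid m₁ S₁ a) (ellipsoid m₂ S₂ b) ≠ ⊤ :=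
  hausdorffEDist_ne_top_of_nonempty_of_bounded (ellipsoid_nonempty ha) (ellipsoid_nonempty hb)
    (isBounded_ellipsoid ha) (isBounded_ellipsoid hb)

lemma hausdorffDist_ellipsoid_le (hS : S.PosSemidef) (ha : 0 ≤ a) (hb : 0 ≤ b) (hB₀ : 0 ≤ B)
    (hB : ∀ u ∈ sphere (0 : EuclideanSpace ℝ (Fin d)) 1, √(quadForm d S u) ≤ B) :
    hausdorffDist (ellipsoid m S a) (ellipsoid m S b) ≤ |a - b| * B := by
  refine hausdorffDist_wulffShape_le (ellipsoid_nonempty ha) (ellipsoid_nonempty hb)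
    (fun u _ => exists_mem_ellipsoid_inner_eq hS ha u)
    (fun u _ => exists_mem_ellipsoid_inner_eq hS hb u) (by positivity) fun u hu => ?_
  rw [add_sub_add_left_eq_sub, ← sub_mul, abs_mul, abs_of_nonneg (sqrt_nonneg _)]
  gcongr
  exact hB u hu

lemma hausdorffDist_ellipsoid_le_norm_sub_add (hS₁ : S₁.PosSemidef) (hS₂ : S₂.PosSemidef)
    (hc : 0 ≤ c) (hM₀ : 0 ≤ M)
    (hM : ∀ u ∈ sphere (0 : EuclideanSpace ℝ (Fin d)) 1,
      |√(quadForm d S₁ u) - √(quadForm d S₂ u)| ≤ M) :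
    hausdorffDist (ellipsoid m₁ S₁ c) (ellipsoid m₂ S₂ c) ≤ ‖m₁ - m₂‖ + c * M := by
  refine hausdorffDist_wulffShape_le (ellipsoid_nonempty hc) (ellipsoid_nonempty hc)
    (fun u _ => exists_mem_ellipsoid_inner_eq hS₁ hc u)
    (fun u _ => exists_mem_ellipsoid_inner_eq hS₂ hc u) (by positivity) fun u hu => ?_
  have hm := abs_real_inner_le_norm u (m₁ - m₂)
  rw [mem_sphere_zero_iff_norm.1 hu, one_mul, inner_sub_right] at hm
  calc _ = |(⟪u, m₁⟫ - ⟪u, m₂⟫) + c * (√(quadForm d S₁ u) - √(quadForm d S₂ u))| := by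
        ring_nf
    _ ≤ |⟪u, m₁⟫ - ⟪u, m₂⟫| + c * |√(quadForm d S₁ u) - √(quadForm d S₂ u)| := by
        rw [← abs_of_nonneg hc, ← abs_mul, abs_of_nonneg hc]
        exact abs_add_le _ _
    _ ≤ ‖m₁ - m₂‖ + c * M := by gcongr; exact hM u hu

lemma norm_sub_le_hausdorffDist_ellipsoid_add (hS₁ : S₁.PosSemidef) (hc : 0 ≤ c) (hM₀ : 0 ≤ M)
    (hM : ∀ u ∈ sphere (0 : EuclideanSpace ℝ (Fin d)) 1,
      |√(quadForm d S₁ u) - √(quadForm d S₂ u)| ≤ M) :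
    ‖m₁ - m₂‖ ≤ hausdorffDist (ellipsoid m₁ S₁ c) (ellipsoid m₂ S₂ c) + c * M := by
  rcases eq_or_ne (m₁ - m₂) 0 with hm | hm
  · rw [hm, norm_zero]
    exact add_nonneg hausdorffDist_nonneg (mul_nonneg hc hM₀)
  have hu := inv_norm_smul_mem_sphere hm
  have hgap := sub_le_hausdorffDist_wulffShape hu (exists_mem_ellipsoid_inner_eq hS₁ hc _)
    (ellipsoid_nonempty hc) (hausdorffEDist_ellipsoid_ne_top (m₁ := m₁) (m₂ := m₂)
      (S₁ := S₁) (S₂ := S₂) hc hc)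
  change _ ≤ hausdorffDist (ellipsoid m₁ S₁ c) (ellipsoid m₂ S₂ c) at hgap
  have hinner := real_inner_inv_norm_smul_self (m₁ - m₂)
  rw [inner_sub_right] at hinner
  have hσ := mul_le_mul_of_nonneg_left (abs_le.1 (hM _ hu)).1 hc
  rw [mul_neg] at hσ
  linarith

lemma abs_hausdorffDist_ellipsoid_sub_norm_le (hS₁ : S₁.PosSemidef) (hS₂ : S₂.PosSemidef)
    (hc : 0 ≤ c) :
    |hausdorffDist (ellipsoid m₁ S₁ c) (ellipsoid m₂ S₂ c) - ‖m₁ - m₂‖| ≤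
      c * ⨆ u : sphere (0 : EuclideanSpace ℝ (Fin d)) 1,
        |√(quadForm d S₁ u) - √(quadForm d S₂ u)| := by
  have hM₀ := Real.iSup_nonneg fun u : sphere (0 : EuclideanSpace ℝ (Fin d)) 1 =>
    abs_nonneg (√(quadForm d S₁ u) - √(quadForm d S₂ u))
  have hM : ∀ u ∈ sphere (0 : EuclideanSpace ℝ (Fin d)) 1,
      |√(quadForm d S₁ u) - √(quadForm d S₂ u)| ≤ ⨆ u : sphere (0 : EuclideanSpace ℝ (Fin d)) 1,
        |√(quadForm d S₁ u) - √(quadForm d S₂ u)| :=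
    fun u hu => le_ciSup bddAbove_abs_sqrt_quadForm_sub (⟨u, hu⟩ : sphere _ _)
  rw [abs_sub_le_iff]
  constructor
  · linarith [hausdorffDist_ellipsoid_le_norm_sub_add (m₁ := m₁) (m₂ := m₂) hS₁ hS₂ hc hM₀ hM]
  · linarith [norm_sub_le_hausdorffDist_ellipsoid_add (m₁ := m₁) (m₂ := m₂) hS₁ hc hM₀ hM]

lemma exists_lipschitzWith_hausdorffDist_ellipsoid (hS₁ : S₁.PosSemidef)
    (hS₂ : S₂.PosSemidef) : ∃ K, LipschitzWith K fun c =>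
      hausdorffDist (ellipsoid m₁ S₁ (max c 0)) (ellipsoid m₂ S₂ (max c 0)) := by
  obtain ⟨B₁, hB₁₀, hB₁⟩ := exists_sqrt_quadForm_le S₁
  obtain ⟨B₂, hB₂₀, hB₂⟩ := exists_sqrt_quadForm_le S₂
  have key : ∀ a b : ℝ,
      hausdorffDist (ellipsoid m₁ S₁ (max a 0)) (ellipsoid m₂ S₂ (max a 0)) ≤
        hausdorffDist (ellipsoid m₁ S₁ (max b 0)) (ellipsoid m₂ S₂ (max b 0)) +
          (B₁ + B₂) * |a - b| := by
    intro a b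
    have ha := le_max_right a 0
    have hb := le_max_right b 0
    have hab : |max a 0 - max b 0| ≤ |a - b| := abs_max_sub_max_le_abs a b 0
    have h₁ := (hausdorffDist_ellipsoid_le (m := m₁) hS₁ ha hb hB₁₀ hB₁).trans
      (mul_le_mul_of_nonneg_right hab hB₁₀)
    have h₂ := (hausdorffDist_ellipsoid_le (m := m₂) hS₂ hb ha hB₂₀ hB₂).trans
      (mul_le_mul_of_nonneg_right (abs_sub_comm (max a 0) (max b 0) ▸ hab) hB₂₀)
    have t₁ := hausdorffDist_triangle (u := ellipsoid m₂ S₂ (max a 0))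
      (hausdorffEDist_ellipsoid_ne_top (m₁ := m₁) (m₂ := m₁) (S₁ := S₁) (S₂ := S₁) ha hb)
    have t₂ := hausdorffDist_triangle (u := ellipsoid m₂ S₂ (max a 0))
      (hausdorffEDist_ellipsoid_ne_top (m₁ := m₁) (m₂ := m₂) (S₁ := S₁) (S₂ := S₂) hb hb)
    linarith
  refine ⟨(B₁ + B₂).toNNReal, LipschitzWith.of_dist_le_mul fun a b => ?_⟩
  rw [Real.coe_toNNReal _ (by positivity), dist_eq_norm, dist_eq_norm, Real.norm_eq_abs,
    Real.norm_eq_abs, abs_sub_le_iff]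
  exact ⟨by linarith [key a b], by linarith [abs_sub_comm b a ▸ key b a]⟩

end Ellipsoid

section GaussianDepth

open scoped NNReal

lemma gaussianReal_Iic_toReal (a : ℝ) {v : ℝ≥0} (hv : v ≠ 0) (t : ℝ) :
    (gaussianReal a v (Iic t)).toReal = stdGaussianCDF ((t - a) / √v) := by
  have hσ : 0 < √(v : ℝ) := sqrt_pos.2 (by positivity)
  have hmap : gaussianReal a v = ((gaussianReal 0 1).map (√(v : ℝ) * ·)).map (· + a) := by
    rw [gaussianReal_map_const_mul, gaussianReal_map_add_const, mul_zero, zero_add]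
    congr
    ext
    simp
  have hpre : (fun x => √(v : ℝ) * x + a) ⁻¹' Iic t = Iic ((t - a) / √v) := by
    ext x
    simp only [mem_preimage, mem_Iic, le_div_iff₀ hσ]
    constructor <;> intro <;> linarith
  rw [hmap, Measure.map_map (by fun_prop) (by fun_prop), Measure.map_apply (by fun_prop)
    measurableSet_Iic]
  exact congrArg (fun s => ((gaussianReal 0 1) s).toReal) hpre

lemma le_stdGaussianCDF_div_iff {α s σ : ℝ} (hσ : 0 < σ) (h0 : 0 < α) (h1 : α < 1) :
    α ≤ stdGaussianCDF (s / σ) ↔ -s ≤ stdGaussianQuantile (1 - α) * σ := by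
  rw [← div_le_iff₀ hσ, neg_div, le_stdGaussianQuantile_iff (by linarith) (by linarith),
    stdGaussianCDF_neg]
  constructor <;> intro <;> linarith

variable {d : ℕ} {m : EuclideanSpace ℝ (Fin d)} {S : Matrix (Fin d) (Fin d) ℝ}
  {μ : Measure (EuclideanSpace ℝ (Fin d))}

lemma measure_halfspace_toReal (hS : S.PosDef) {u : EuclideanSpace ℝ (Fin d)} (hu : u ≠ 0)
    (hμ : Measure.map (fun x => ⟪u, x⟫) μ = gaussianReal ⟪u, m⟫ (quadForm d S u).toNNReal)
    (t : ℝ) :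
    (μ {y | ⟪u, y⟫ ≤ t}).toReal = stdGaussianCDF ((t - ⟪u, m⟫) / √(quadForm d S u)) := by
  have hq := quadForm_pos hS hu
  rw [show {y | ⟪u, y⟫ ≤ t} = (fun y => ⟪u, y⟫) ⁻¹' Iic t from rfl,
    ← Measure.map_apply (by fun_prop) measurableSet_Iic, hμ,
    gaussianReal_Iic_toReal _ (by simpa using hq), Real.coe_toNNReal _ hq.le]

lemma hdRegion_eq_ellipsoid [Nontrivial (EuclideanSpace ℝ (Fin d))] (hS : S.PosDef)
    (hμ : ∀ u : EuclideanSpace ℝ (Fin d),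
      Measure.map (fun x => ⟪u, x⟫) μ = gaussianReal ⟪u, m⟫ (quadForm d S u).toNNReal)
    {α : ℝ} (h0 : 0 < α) (h1 : α < 1) :
    hdRegion d μ α = ellipsoid m S (stdGaussianQuantile (1 - α)) := by
  have : Nonempty (sphere (0 : EuclideanSpace ℝ (Fin d)) 1) :=
    (NormedSpace.sphere_nonempty.2 zero_le_one).to_subtype
  have hmem : ∀ x, x ∈ hdRegion d μ α ↔ ∀ u ∈ sphere (0 : EuclideanSpace ℝ (Fin d)) 1,
      -⟪u, x - m⟫ ≤ stdGaussianQuantile (1 - α) * √(quadForm d S u) := by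
    intro x
    rw [hdRegion, mem_ofPred_eq, halfspaceDepth,
      le_ciInf_iff ⟨0, by rintro _ ⟨u, rfl⟩; exact ENNReal.toReal_nonneg⟩, Subtype.forall]
    refine forall₂_congr fun u hu => ?_
    have hu0 : u ≠ 0 := ne_zero_of_mem_sphere one_ne_zero ⟨u, hu⟩
    rw [measure_halfspace_toReal hS hu0 (hμ u), ← inner_sub_right,
      le_stdGaussianCDF_div_iff (sqrt_pos.2 (quadForm_pos hS hu0)) h0 h1]
  -- the sign produced by the symmetry of `Φ` is absorbed by the substitution `u ↦ -u`
  ext x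
  rw [hmem]
  constructor
  · intro hx u hu
    have := hx (-u) (by simpa using hu)
    rw [quadForm_neg, inner_neg_left, neg_neg, inner_sub_right] at this
    linarith
  · intro hx u hu
    have := hx (-u) (by simpa using hu)
    dsimp only at this
    rw [quadForm_neg, inner_neg_left, inner_neg_left] at this
    rw [inner_sub_right]
    linarith

end GaussianDepth

lemma abs_average_sub_le_of_abs_sub_le {f g : ℝ → ℝ} {a b Δ M : ℝ} (hab : a < b)
    (hf : AEStronglyMeasurable f (volume.restrict (Ioc a b))) (hg : IntegrableOn g (Ioc a b))
    (hfg : ∀ x ∈ Ioc a b, |f x - Δ| ≤ |g x| * M) :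
    |(b - a)⁻¹ * (∫ x in a..b, f x) - Δ| ≤ ((b - a)⁻¹ * ∫ x in a..b, |g x|) * M := by
  have hgM : IntervalIntegrable (fun x => |g x| * M) volume a b :=
    (intervalIntegrable_iff_integrableOn_Ioc_of_le hab.le).2 (hg.abs.mul_const M)
  have hfI : IntervalIntegrable f volume a b := by
    refine (intervalIntegrable_iff_integrableOn_Ioc_of_le hab.le).2 <|
      (hgM.add (intervalIntegrable_const (c := |Δ|))).1.mono' hf
      (ae_restrict_of_forall_mem measurableSet_Ioc fun x hx => ?_)
    rw [Real.norm_eq_abs]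
    linarith [hfg x hx, abs_sub_abs_le_abs_sub (f x) Δ]
  have hΔ : (b - a)⁻¹ * (∫ x in a..b, f x) - Δ = (b - a)⁻¹ * ∫ x in a..b, (f x - Δ) := by
    rw [intervalIntegral.integral_sub hfI intervalIntegrable_const,
      intervalIntegral.integral_const, smul_eq_mul, mul_sub, inv_mul_cancel_left₀
      (sub_pos.2 hab).ne']
  rw [hΔ, abs_mul, abs_of_pos (inv_pos.2 (sub_pos.2 hab)), mul_assoc,
    ← intervalIntegral.integral_mul_const]
  gcongr
  calc |∫ x in a..b, (f x - Δ)| ≤ ∫ x in a..b, |f x - Δ| :=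
        intervalIntegral.abs_integral_le_integral_abs hab.le
    _ ≤ ∫ x in a..b, |g x| * M :=
        intervalIntegral.integral_mono_on_of_le_Ioo hab.le (hfI.sub intervalIntegrable_const).abs
          hgM fun x hx => hfg x (Ioo_subset_Ioc_self hx)

lemma DR1eps_eq_zero_of_subsingleton {d : ℕ} [Subsingleton (EuclideanSpace ℝ (Fin d))]
    (ε : ℝ) (μ ν : Measure (EuclideanSpace ℝ (Fin d))) : DR1eps d ε μ ν = 0 := by
  have : IsEmpty (sphere (0 : EuclideanSpace ℝ (Fin d)) 1) :=
    ⟨fun u => by simpa [Subsingleton.elim (u : EuclideanSpace ℝ (Fin d)) 0] using u.2⟩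
  have hregion : ∀ α, hdRegion d μ α = hdRegion d ν α := fun α => by
    simp only [hdRegion, halfspaceDepth, Real.iInf_of_isEmpty]
  simp [DR1eps, hregion]

theorem stmt_18_general (d : ℕ)
    (m₁ m₂ : EuclideanSpace ℝ (Fin d)) (S₁ S₂ : Matrix (Fin d) (Fin d) ℝ)
    (hS₁ : S₁.PosDef) (hS₂ : S₂.PosDef)
    (μ ν : Measure (EuclideanSpace ℝ (Fin d)))
    -- `μ = N(m₁, Σ₁)` and `ν = N(m₂, Σ₂)`
    (hμ : ∀ u : EuclideanSpace ℝ (Fin d),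
      Measure.map (fun x => ⟪u, x⟫) μ =
        gaussianReal ⟪u, m₁⟫ (Real.toNNReal (quadForm d S₁ u)))
    (hν : ∀ u : EuclideanSpace ℝ (Fin d),
      Measure.map (fun x => ⟪u, x⟫) ν =
        gaussianReal ⟪u, m₂⟫ (Real.toNNReal (quadForm d S₂ u)))
    (ε : ℝ) (hε : 0 ≤ ε) (hε2 : ε < 1 / 2) :
    |DR1eps d ε μ ν - ‖m₁ - m₂‖| ≤
      ((1 / 2 - ε)⁻¹ * ∫ α in ε..(1 / 2), |stdGaussianQuantile (1 - α)|) *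
        ⨆ u : Metric.sphere (0 : EuclideanSpace ℝ (Fin d)) 1,
          |Real.sqrt (quadForm d S₁ u) - Real.sqrt (quadForm d S₂ u)| := by
  rcases subsingleton_or_nontrivial (EuclideanSpace ℝ (Fin d)) with _ | _
  · rw [DR1eps_eq_zero_of_subsingleton, Subsingleton.elim m₁ m₂, sub_self, norm_zero, sub_zero,
      abs_zero]
    exact mul_nonneg (mul_nonneg (inv_nonneg.2 (by linarith))
      (intervalIntegral.integral_nonneg hε2.le fun _ _ => abs_nonneg _))
      (Real.iSup_nonneg fun _ => abs_nonneg _)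
  have hQ : ∀ α ∈ Ioc ε (1 / 2), 0 ≤ stdGaussianQuantile (1 - α) := fun α hα =>
    stdGaussianQuantile_nonneg (by linarith [hα.2]) (by linarith [hα.1])
  have hregion : ∀ α ∈ Ioc ε (1 / 2), hausdorffDist (hdRegion d μ α) (hdRegion d ν α) =
      hausdorffDist (ellipsoid m₁ S₁ (stdGaussianQuantile (1 - α)))
        (ellipsoid m₂ S₂ (stdGaussianQuantile (1 - α))) := fun α hα => by
    rw [hdRegion_eq_ellipsoid hS₁ hμ (by linarith [hα.1]) (by linarith [hα.2]),
      hdRegion_eq_ellipsoid hS₂ hν (by linarith [hα.1]) (by linarith [hα.2])]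
  have hg := integrableOn_stdGaussianQuantile_one_sub.mono_set (Ioc_subset_Ioc_left hε)
  obtain ⟨K, hK⟩ := exists_lipschitzWith_hausdorffDist_ellipsoid (m₁ := m₁) (m₂ := m₂)
    hS₁.posSemidef hS₂.posSemidef
  rw [DR1eps]
  refine abs_average_sub_le_of_abs_sub_le hε2 ?_ hg fun α hα => ?_
  · -- a Lipschitz function of the monotone map `α ↦ Φ⁻¹(1 - α)`
    refine (hK.continuous.measurable.comp_aemeasurable hg.aemeasurable).aestronglyMeasurable.congr
      (ae_restrict_of_forall_mem measurableSet_Ioc fun α hα => ?_)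
    simp only [Function.comp_apply, max_eq_left (hQ α hα), hregion α hα]
  · rw [hregion α hα, abs_of_nonneg (hQ α hα)]
    exact abs_hausdorffDist_ellipsoid_sub_norm_le hS₁.posSemidef hS₂.posSemidef (hQ α hα)

theorem stmt_18 (d : ℕ)
    (m₁ m₂ : EuclideanSpace ℝ (Fin d)) (S₁ S₂ : Matrix (Fin d) (Fin d) ℝ)
    (hS₁ : S₁.PosDef) (hS₂ : S₂.PosDef)
    (μ ν : Measure (EuclideanSpace ℝ (Fin d)))
    [IsProbabilityMeasure μ] [IsProbabilityMeasure ν]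
    -- `μ = N(m₁, Σ₁)` and `ν = N(m₂, Σ₂)`
    (hμ : ∀ u : EuclideanSpace ℝ (Fin d),
      Measure.map (fun x => ⟪u, x⟫) μ =
        gaussianReal ⟪u, m₁⟫ (Real.toNNReal (quadForm d S₁ u)))
    (hν : ∀ u : EuclideanSpace ℝ (Fin d),
      Measure.map (fun x => ⟪u, x⟫) ν =
        gaussianReal ⟪u, m₂⟫ (Real.toNNReal (quadForm d S₂ u)))
    (ε : ℝ) (hε : 0 ≤ ε) (hε2 : ε < 1 / 2) :
    |DR1eps d ε μ ν - ‖m₁ - m₂‖| ≤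
      ((1 / 2 - ε)⁻¹ * ∫ α in ε..(1 / 2), |stdGaussianQuantile (1 - α)|) *
        ⨆ u : Metric.sphere (0 : EuclideanSpace ℝ (Fin d)) 1,
          |Real.sqrt (quadForm d S₁ u) - Real.sqrt (quadForm d S₂ u)| :=
  stmt_18_general d m₁ m₂ S₁ S₂ hS₁ hS₂ μ ν hμ hν ε hε hε2
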